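/- For any vectors c, d ∈ ℝ³, tr([c]× [d]× [−c−d]×) = 0; equivalently, setting E₁₂ = [c]×, E₂₃ = [d]×, E₃₁ = −[c]× − [d]×, one has tr(E₁₂E₂₃E₃₁) = 0. -/

import Mathlib

open Matrix

/-- The cross-product matrix of a vector `a ∈ ℝ³`. -/
def skew (a : Fin 3 → ℝ) : Matrix (Fin 3) (Fin 3) ℝ :=
  !![0, -a 2, a 1; a 2, 0, -a 0; -a 1, a 0, 0]

/-!
Cross-product matrices are skew-symmetric, and `tr(A S) = 0` whenever `A` is skew-symmetric and
`S` symmetric, since `tr(A S) = tr((A S)ᵀ) = tr(Aᵀ Sᵀ) = -tr(A S)`. Expanding,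
`tr(A B (-A - B)) = -tr(B (A A)) - tr(A (B B))` (cycling the trace in the first term), and both
`A A` and `B B` are symmetric.
-/

namespace Matrix

variable {n R : Type*} [Fintype n] [CommRing R]

theorem isSymm_mul_self_of_transpose_eq_neg {A : Matrix n n R} (hA : Aᵀ = -A) :
    (A * A).IsSymm := by
  rw [IsSymm, transpose_mul, hA, neg_mul_neg]

theorem trace_mul_eq_zero_of_transpose_eq_neg_of_isSymm [IsAddTorsionFree R]
    {A S : Matrix n n R} (hA : Aᵀ = -A) (hS : S.IsSymm) : trace (A * S) = 0 := by
  rw [← neg_eq_self]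
  calc -trace (A * S) = trace (Aᵀ * S) := by rw [hA, Matrix.neg_mul, trace_neg]
    _ = trace (Aᵀ * Sᵀ) := by rw [hS.eq]
    _ = trace (A * S) := trace_transpose_mul A S

theorem trace_mul_mul_neg_sub_eq_zero_of_transpose_eq_neg [IsAddTorsionFree R]
    {A B : Matrix n n R} (hA : Aᵀ = -A) (hB : Bᵀ = -B) : trace (A * B * (-A - B)) = 0 := by
  have hBAA : trace (B * (A * A)) = 0 :=
    trace_mul_eq_zero_of_transpose_eq_neg_of_isSymm hB (isSymm_mul_self_of_transpose_eq_neg hA)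
  have hABB : trace (A * (B * B)) = 0 :=
    trace_mul_eq_zero_of_transpose_eq_neg_of_isSymm hA (isSymm_mul_self_of_transpose_eq_neg hB)
  have hABA : trace (A * B * A) = trace (B * (A * A)) := by
    rw [Matrix.mul_assoc, trace_mul_comm, Matrix.mul_assoc]
  rw [Matrix.mul_sub, Matrix.mul_neg, trace_sub, trace_neg, hABA, hBAA, Matrix.mul_assoc, hABB,
    neg_zero, sub_zero]

end Matrix

theorem transpose_skew (a : Fin 3 → ℝ) : (skew a)ᵀ = -skew a := by
  ext i j
  fin_cases i <;> fin_cases j <;> simp [skew]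

/-- With `E₁₂ = [c]×`, `E₂₃ = [d]×`, `E₃₁ = −[c]× − [d]×`, one has `tr(E₁₂E₂₃E₃₁) = 0`. -/
theorem trace_triple_skew (c d : Fin 3 → ℝ) :
    Matrix.trace (skew c * skew d * (-skew c - skew d)) = 0 :=
  trace_mul_mul_neg_sub_eq_zero_of_transpose_eq_neg (transpose_skew c) (transpose_skew d)
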